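/- arXiv:2103.14467 — 2 statements merged into one kernel-verified Lean document; each statement's English description precedes it below -/
import Mathlib

section
/- Let Γ be a discrete group with 2-cocycle σ and let a be an element of the σ-twisted group von Neumann algebra vN(Γ,σ) on ℓ²(Γ). Then a is a positive operator if and only if its Fourier coefficient â : Γ → ℂ, defined by â(γ) = ⟨a δ_e, δ_γ⟩, is a σ-positive definite function. -/
/-!
The twisted right regular representation `(ρ(γ) f)(γ') = conj σ(γ', γ) f(γ' γ)` commutes with
`λ_σ` by the cocycle identity, so every `a ∈ vN(Γ, σ)` commutes with `ρ`. As
`δ_g = σ(g, g⁻¹) ρ(g⁻¹) δ_e`, this forces `(a δ_g)(γ) = σ(γ g⁻¹, g) â(γ g⁻¹)`, and the sum in the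
definition of `σ`-positive definiteness for `(gᵢ, cᵢ)` becomes `⟪x, a x⟫` with
`x = ∑ cᵢ δ_{gᵢ}`. Such `x` are dense in `ℓ²(Γ)`, and `x ↦ ⟪x, a x⟫` is continuous.
-/

open scoped ComplexConjugate ComplexOrder ENNReal

namespace lp

variable {ι 𝕜 : Type*} [NormedField 𝕜] {p : ℝ≥0∞}

lemma memℓp_mul_comp_equiv (hp : 0 < p.toReal) {w : ι → 𝕜} (hw : ∀ i, ‖w i‖ = 1) (e : ι ≃ ι)
    {f : ι → 𝕜} (hf : Memℓp f p) : Memℓp (fun i => w i * f (e i)) p := by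
  rw [memℓp_gen_iff hp] at hf ⊢
  simpa [Function.comp_def, norm_mul, hw] using e.summable_iff.mpr hf

lemma tsum_norm_rpow_mul_comp_equiv {w : ι → 𝕜} (hw : ∀ i, ‖w i‖ = 1) (e : ι ≃ ι)
    (f : ι → 𝕜) : ∑' i, ‖w i * f (e i)‖ ^ p.toReal = ∑' i, ‖f i‖ ^ p.toReal := by
  simpa [norm_mul, hw] using e.tsum_eq (fun i => ‖f i‖ ^ p.toReal)

variable [Fact (1 ≤ p)]

noncomputable def weightedComp (hp : 0 < p.toReal) (w : ι → 𝕜) (hw : ∀ i, ‖w i‖ = 1)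
    (e : ι ≃ ι) : lp (fun _ : ι => 𝕜) p →L[𝕜] lp (fun _ : ι => 𝕜) p :=
  LinearMap.mkContinuous
    { toFun := fun f => ⟨fun i => w i * f (e i), memℓp_mul_comp_equiv hp hw e (lp.memℓp f)⟩
      map_add' := fun f g => by ext i; simp [mul_add]; rfl
      map_smul' := fun c f => by ext i; simp [mul_left_comm] }
    1 fun f => by
      rw [one_mul]
      refine norm_le_of_tsum_le hp (norm_nonneg f) ?_
      rw [lp.norm_rpow_eq_tsum hp f]
      exact (tsum_norm_rpow_mul_comp_equiv hw e f).le

lemma weightedComp_apply (hp : 0 < p.toReal) (w : ι → 𝕜) (hw : ∀ i, ‖w i‖ = 1) (e : ι ≃ ι)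
    (f : lp (fun _ : ι => 𝕜) p) (i : ι) : weightedComp hp w hw e f i = w i * f (e i) := rfl

lemma dense_span_single [DecidableEq ι] (hp : p ≠ ∞) :
    Dense ((Submodule.span 𝕜 (Set.range fun i => lp.single p i (1 : 𝕜)) :
      Submodule 𝕜 (lp (fun _ : ι => 𝕜) p)) : Set (lp (fun _ : ι => 𝕜) p)) := by
  refine fun x => mem_closure_of_tendsto (lp.hasSum_single hp x)
    (Filter.Eventually.of_forall fun s => Submodule.sum_mem _ fun i _ => ?_)
  have h := Submodule.smul_mem (Submodule.span 𝕜 (Set.range fun i => lp.single p i (1 : 𝕜)))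
    (x i) (Submodule.subset_span (Set.mem_range_self i))
  rwa [← lp.single_smul, smul_eq_mul, mul_one] at h

end lp

lemma Submodule.mem_span_range_iff_exists_fin_sum {R M α : Type*} [Semiring R] [AddCommMonoid M]
    [Module R M] {v : α → M} {x : M} :
    x ∈ span R (Set.range v) ↔
      ∃ (n : ℕ) (c : Fin n → R) (g : Fin n → α), ∑ i, c i • v (g i) = x := by
  rw [mem_span_set']
  constructor
  · rintro ⟨n, c, g, rfl⟩
    choose g' hg' using fun i => (g i).2
    exact ⟨n, c, g', by simp [hg']⟩
  · rintro ⟨n, c, g, rfl⟩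
    exact ⟨n, c, fun i => ⟨v (g i), g i, rfl⟩, rfl⟩

namespace ContinuousLinearMap

variable {E : Type*} [NormedAddCommGroup E] [InnerProductSpace ℂ E]

lemma isPositive_iff_forall_inner_nonneg (T : E →L[ℂ] E) :
    T.IsPositive ↔ ∀ x, 0 ≤ inner ℂ x (T x) := by
  refine ⟨fun hT => hT.inner_nonneg_right, fun h => (isPositive_iff T).mpr ?_⟩
  have h_real (x : E) : inner ℂ (T x) x = inner ℂ x (T x) := by
    rw [← inner_conj_symm]
    exact Complex.conj_eq_iff_im.mpr (Complex.nonneg_iff.mp (h x)).2.symm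
  refine ⟨(LinearMap.isSymmetric_iff_inner_map_self_real _).mpr fun x => ?_, fun x => ?_⟩
  · simp only [coe_coe, h_real, inner_conj_symm]
  · exact h_real x ▸ h x

lemma isPositive_of_dense {T : E →L[ℂ] E} {S : Set E} (hS : Dense S)
    (h : ∀ x ∈ S, 0 ≤ inner ℂ x (T x)) : T.IsPositive :=
  (isPositive_iff_forall_inner_nonneg T).mpr fun x =>
    hS.induction h (isClosed_le continuous_const (continuous_id.inner T.continuous)) x

end ContinuousLinearMap

section TwistedRegular

variable {Γ : Type*} [Group Γ] {σ : Γ → Γ → ℂ}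

local notation "ℓ²" => lp (fun _ : Γ => ℂ) 2

lemma cocycle_apply_one_right (hσ_unit : ∀ x y, ‖σ x y‖ = 1)
    (hσ_cocycle : ∀ x y z, σ x y * σ (x * y) z = σ x (y * z) * σ y z) (hσ_one : σ 1 1 = 1)
    (x : Γ) : σ x 1 = 1 := by
  have h := hσ_cocycle x 1 1
  simp only [mul_one, hσ_one] at h
  exact mul_left_cancel₀ (ne_zero_of_norm_ne_zero (a := σ x 1) (by simp [hσ_unit]))
    (by rw [h, mul_one])

noncomputable def twistedRightReg (hσ_unit : ∀ x y, ‖σ x y‖ = 1) (γ : Γ) : ℓ² →L[ℂ] ℓ² :=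
  lp.weightedComp (by norm_num) (fun γ' => conj (σ γ' γ)) (by simp [hσ_unit])
    (Equiv.mulRight γ)

lemma twistedRightReg_apply (hσ_unit : ∀ x y, ‖σ x y‖ = 1) (γ : Γ) (f : ℓ²) (γ' : Γ) :
    twistedRightReg hσ_unit γ f γ' = conj (σ γ' γ) * f (γ' * γ) := rfl

lemma twistedRightReg_mul_comm (hσ_unit : ∀ x y, ‖σ x y‖ = 1)
    (hσ_cocycle : ∀ x y z, σ x y * σ (x * y) z = σ x (y * z) * σ y z) (γ x : Γ) {L : ℓ² →L[ℂ] ℓ²}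
    (hL : ∀ f γ', L f γ' = σ x (x⁻¹ * γ') * f (x⁻¹ * γ')) :
    twistedRightReg hσ_unit γ * L = L * twistedRightReg hσ_unit γ := by
  ext f γ'
  simp only [mul_apply_eq_comp, twistedRightReg_apply, hL, ← mul_assoc x⁻¹ γ' γ,
    ← RCLike.inv_eq_conj (hσ_unit _ _)]
  have hne (u v : Γ) : σ u v ≠ 0 := ne_zero_of_norm_ne_zero (by simp [hσ_unit])
  have h := hσ_cocycle x (x⁻¹ * γ') γ
  rw [mul_inv_cancel_left] at h
  field_simp [hne]
  linear_combination -f (x⁻¹ * γ' * γ) * h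

variable [DecidableEq Γ]

lemma single_eq_smul_twistedRightReg (hσ_unit : ∀ x y, ‖σ x y‖ = 1) (g : Γ) :
    lp.single 2 g (1 : ℂ) = σ g g⁻¹ • twistedRightReg hσ_unit g⁻¹ (lp.single 2 1 1) := by
  ext γ'
  rw [lp.coeFn_smul, Pi.smul_apply, smul_eq_mul, twistedRightReg_apply]
  by_cases h : γ' = g
  · subst h
    rw [mul_inv_cancel, lp.single_apply_self, lp.single_apply_self, mul_one, Complex.mul_conj',
      hσ_unit]
    norm_num
  · rw [lp.single_apply_ne _ _ _ h, lp.single_apply_ne _ _ _ (mul_inv_eq_one.not.mpr h),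
      mul_zero, mul_zero]

lemma apply_single_eq_of_commute (hσ_unit : ∀ x y, ‖σ x y‖ = 1)
    (hσ_cocycle : ∀ x y z, σ x y * σ (x * y) z = σ x (y * z) * σ y z) (hσ_one : σ 1 1 = 1)
    {a : ℓ² →L[ℂ] ℓ²} (ha : ∀ γ, a * twistedRightReg hσ_unit γ = twistedRightReg hσ_unit γ * a)
    (g γ' : Γ) :
    a (lp.single 2 g 1) γ' = σ (γ' * g⁻¹) g * a (lp.single 2 1 1) (γ' * g⁻¹) := by
  have h := congrArg (· (lp.single 2 (1 : Γ) (1 : ℂ))) (ha g⁻¹)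
  simp only [mul_apply_eq_comp] at h
  rw [single_eq_smul_twistedRightReg hσ_unit g, map_smul, h, lp.coeFn_smul, Pi.smul_apply,
    smul_eq_mul, twistedRightReg_apply, ← RCLike.inv_eq_conj (hσ_unit _ _), ← mul_assoc]
  congr 1
  have hc := hσ_cocycle (γ' * g⁻¹) g g⁻¹
  rw [inv_mul_cancel_right, mul_inv_cancel, cocycle_apply_one_right hσ_unit hσ_cocycle hσ_one,
    one_mul] at hc
  rw [← hc, mul_inv_cancel_right₀ (norm_ne_zero_iff.mp (by simp [hσ_unit]))]

lemma twistedQuadraticForm_eq_inner (hσ_unit : ∀ x y, ‖σ x y‖ = 1)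
    (hσ_cocycle : ∀ x y z, σ x y * σ (x * y) z = σ x (y * z) * σ y z) (hσ_one : σ 1 1 = 1)
    {a : ℓ² →L[ℂ] ℓ²} (ha : ∀ γ, a * twistedRightReg hσ_unit γ = twistedRightReg hσ_unit γ * a)
    {n : ℕ} (g : Fin n → Γ) (c : Fin n → ℂ) :
    ∑ i, ∑ j, σ (g j * (g i)⁻¹) (g i) * c i * conj (c j) * a (lp.single 2 1 1) (g j * (g i)⁻¹) =
      inner ℂ (∑ i, c i • lp.single 2 (g i) 1) (a (∑ i, c i • lp.single 2 (g i) 1)) := by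
  rw [Finset.sum_comm, map_sum, sum_inner]
  refine Finset.sum_congr rfl fun j _ => ?_
  rw [inner_sum]
  refine Finset.sum_congr rfl fun i _ => ?_
  rw [map_smul, inner_smul_left, inner_smul_right, lp.inner_single_left, RCLike.inner_apply,
    map_one, mul_one, apply_single_eq_of_commute hσ_unit hσ_cocycle hσ_one ha (g i) (g j)]
  ring

end TwistedRegular

/-- an element `a` of the twisted group von Neumann algebra `vN(Γ,σ)` is a
positive operator iff its Fourier coefficient `â(γ) = ⟨a δ_e, δ_γ⟩ = (a δ_e)(γ)` is a
`σ`-positive definite function on `Γ`. -/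
theorem mem_twistedGroupVonNeumannAlgebra_positive_iff {Γ : Type*} [Group Γ] [DecidableEq Γ]
    (σ : Γ → Γ → ℂ)
    (hσ_unit : ∀ x y, ‖σ x y‖ = 1)
    (hσ_cocycle : ∀ x y z, σ x y * σ (x * y) z = σ x (y * z) * σ y z)
    (hσ_one : σ 1 1 = 1)
    -- the σ-projective left regular representation on ℓ²(Γ)
    (lam : Γ → (lp (fun _ : Γ => ℂ) 2 →L[ℂ] lp (fun _ : Γ => ℂ) 2))
    (hlam : ∀ (γ : Γ) (f : lp (fun _ : Γ => ℂ) 2) (γ' : Γ),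
      (lam γ f) γ' = σ γ (γ⁻¹ * γ') * f (γ⁻¹ * γ'))
    -- M = vN(Γ,σ), the double commutant of {λ_σ(γ)}
    (M : Set (lp (fun _ : Γ => ℂ) 2 →L[ℂ] lp (fun _ : Γ => ℂ) 2))
    (hM : M = {a | ∀ b, (∀ γ : Γ, b * lam γ = lam γ * b) → a * b = b * a})
    (a : lp (fun _ : Γ => ℂ) 2 →L[ℂ] lp (fun _ : Γ => ℂ) 2) (ha : a ∈ M) :
    a.IsPositive ↔
      -- the Fourier coefficient â(γ) = (a δ_e)(γ) is σ-positive definite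
      (∀ (n : ℕ) (g : Fin n → Γ) (c : Fin n → ℂ),
        0 ≤ ∑ i : Fin n, ∑ j : Fin n,
          σ (g j * (g i)⁻¹) (g i) * c i * conj (c j) *
            (a (lp.single 2 (1 : Γ) (1 : ℂ))) (g j * (g i)⁻¹)) := by
  rw [hM] at ha
  have ha_comm (γ : Γ) : a * twistedRightReg hσ_unit γ = twistedRightReg hσ_unit γ * a :=
    ha _ fun x => twistedRightReg_mul_comm hσ_unit hσ_cocycle γ x (hlam x)
  simp_rw [twistedQuadraticForm_eq_inner hσ_unit hσ_cocycle hσ_one ha_comm]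
  refine ⟨fun ha_pos n g c => ha_pos.inner_nonneg_right _, fun h_pd => ?_⟩
  refine ContinuousLinearMap.isPositive_of_dense (lp.dense_span_single (by norm_num))
    fun x hx => ?_
  obtain ⟨n, c, g, rfl⟩ := Submodule.mem_span_range_iff_exists_fin_sum.mp hx
  exact h_pd n g c
end

section
/- Let G be a second countable, unimodular, locally compact group with Haar measure, σ a 2-cocycle on G, Γ a discrete subgroup of G, and B ⊆ G a Borel fundamental domain for Γ. If (e_i)_{i∈I} is an orthonormal basis of L²(B) and ẽ_i ∈ L²(G) denotes the extension of e_i to G by zero outside B, then the family (λ_σ^G(γ) ẽ_i)_{γ ∈ Γ, i ∈ I} is an orthonormal basis of L²(G). -/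
open MeasureTheory ComplexConjugate
open scoped InnerProductSpace

/-!
Writing `λ(x)` for the twisted translation and `λ(x)*` for its formal adjoint
`ψ ↦ conj σ(x, ·) · ψ(x ·)`, left invariance of the Haar measure gives
`⟪λ(x) ẽ, f⟫ = ⟪e, (λ(x)* f)|_B⟫_{L²(B)}`. Since `|σ| = 1`, `λ(x)* λ(x)` is the identity,
which gives orthonormality within one translate; distinct translates `γB` are disjoint, which gives
orthogonality across translates. If `f` is orthogonal to every `λ(γ) ẽ_i`, then each
`(λ(γ)* f)|_B` is orthogonal to the Hilbert basis `(e_i)`, so `f` vanishes a.e. on every `γB`;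
as `Γ` is countable and the translates cover `G`, `f = 0`.
-/

theorem HilbertBasis.eq_zero_of_forall_inner_eq_zero {ι 𝕜 E : Type*} [RCLike 𝕜]
    [NormedAddCommGroup E] [InnerProductSpace 𝕜 E] (b : HilbertBasis ι 𝕜 E) {x : E}
    (h : ∀ i, ⟪b i, x⟫_𝕜 = 0) : x = 0 := by
  have hsum := b.hasSum_repr x
  simp only [b.repr_apply_apply, h, zero_smul] at hsum
  exact hsum.unique hasSum_zero

section TwistedTranslate

variable {G : Type*} [Group G]

def twistedTranslate (σ : G → G → ℂ) (x : G) (φ : G → ℂ) (y : G) : ℂ :=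
  σ x (x⁻¹ * y) * φ (x⁻¹ * y)

def twistedTranslateAdjoint (σ : G → G → ℂ) (x : G) (ψ : G → ℂ) (z : G) : ℂ :=
  conj (σ x z) * ψ (x * z)

theorem twistedTranslateAdjoint_twistedTranslate {σ : G → G → ℂ} {x : G}
    (hσ : ∀ z, ‖σ x z‖ = 1) (φ : G → ℂ) :
    twistedTranslateAdjoint σ x (twistedTranslate σ x φ) = φ := by
  funext z
  rw [twistedTranslateAdjoint, twistedTranslate, inv_mul_cancel_left, ← mul_assoc,
    RCLike.conj_mul, hσ]
  simp

theorem twistedTranslateAdjoint_twistedTranslate_indicator_of_notMem {σ : G → G → ℂ}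
    {x x' z : G} {B : Set G} (h : x'⁻¹ * (x * z) ∉ B) (φ : G → ℂ) :
    twistedTranslateAdjoint σ x (twistedTranslate σ x' (B.indicator φ)) z = 0 := by
  simp [twistedTranslateAdjoint, twistedTranslate, h]

variable [MeasurableSpace G] [MeasurableMul G] {μ : Measure G} [μ.IsMulLeftInvariant]

theorem twistedTranslate_ae_congr (σ : G → G → ℂ) (x : G) {φ ψ : G → ℂ}
    (h : φ =ᵐ[μ] ψ) : twistedTranslate σ x φ =ᵐ[μ] twistedTranslate σ x ψ := by
  filter_upwards [(measurePreserving_mul_left μ x⁻¹).quasiMeasurePreserving.ae h] with y hy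
  simp only [twistedTranslate, hy]

theorem twistedTranslateAdjoint_ae_congr (σ : G → G → ℂ) (x : G) {φ ψ : G → ℂ}
    (h : φ =ᵐ[μ] ψ) : twistedTranslateAdjoint σ x φ =ᵐ[μ] twistedTranslateAdjoint σ x ψ := by
  filter_upwards [(measurePreserving_mul_left μ x).quasiMeasurePreserving.ae h] with y hy
  simp only [twistedTranslateAdjoint, hy]

theorem integral_conj_twistedTranslate_mul (σ : G → G → ℂ) (x : G) (φ ψ : G → ℂ) :
    ∫ y, conj (twistedTranslate σ x φ y) * ψ y ∂μ =
      ∫ z, conj (φ z) * twistedTranslateAdjoint σ x ψ z ∂μ := by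
  rw [← integral_mul_left_eq_self _ x]
  congr 1
  funext z
  simp only [twistedTranslate, twistedTranslateAdjoint, inv_mul_cancel_left, map_mul]
  ring

variable {κ : Type*} {g : κ → G} {B : Set G}

theorem ae_of_forall_ae_restrict_mul_left [Countable κ] (hB : MeasurableSet B)
    (hcover : ∀ y, ∃ k, (g k)⁻¹ * y ∈ B) {P : G → Prop}
    (h : ∀ k, ∀ᵐ z ∂μ.restrict B, P (g k * z)) : ∀ᵐ y ∂μ, P y := by
  have htranslate : ∀ k, ∀ᵐ y ∂μ, (g k)⁻¹ * y ∈ B → P y := fun k => by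
    simpa using (measurePreserving_mul_left μ (g k)⁻¹).quasiMeasurePreserving.ae
      ((ae_restrict_iff' hB).mp (h k))
  filter_upwards [ae_all_iff.mpr htranslate] with y hy
  obtain ⟨k, hk⟩ := hcover y
  exact hy k hk

variable {ι : Type*} {σ : G → G → ℂ}

theorem memLp_twistedTranslateAdjoint {x : G} (hσ_meas : Measurable (σ x))
    (hσ_unit : ∀ z, ‖σ x z‖ = 1) {f : G → ℂ} (hf : MemLp f 2 μ) :
    MemLp (twistedTranslateAdjoint σ x f) 2 μ := by
  have hfx : MemLp (fun z => f (x * z)) 2 μ :=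
    hf.comp_measurePreserving (measurePreserving_mul_left μ x)
  refine hfx.of_le ((continuous_star.measurable.comp hσ_meas).aestronglyMeasurable.mul
    hfx.aestronglyMeasurable) (Filter.Eventually.of_forall fun z => ?_)
  rw [twistedTranslateAdjoint, norm_mul, RCLike.norm_conj, hσ_unit, one_mul]

theorem inner_eq_inner_restrict_twistedTranslateAdjoint (hB : MeasurableSet B) {x : G}
    {u f : Lp ℂ 2 μ} {p q : Lp ℂ 2 (μ.restrict B)}
    (hu : u =ᵐ[μ] twistedTranslate σ x (B.indicator p))
    (hq : q =ᵐ[μ.restrict B] twistedTranslateAdjoint σ x f) :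
    ⟪u, f⟫_ℂ = ⟪p, q⟫_ℂ := by
  rw [L2.inner_def, L2.inner_def]
  calc ∫ y, ⟪u y, f y⟫_ℂ ∂μ
      = ∫ y, conj (twistedTranslate σ x (B.indicator p) y) * f y ∂μ := by
        refine integral_congr_ae ?_
        filter_upwards [hu] with y hy
        rw [hy, RCLike.inner_apply']
    _ = ∫ z, B.indicator (fun z => conj (p z) * twistedTranslateAdjoint σ x f z) z ∂μ := by
        rw [integral_conj_twistedTranslate_mul]
        congr 1
        funext z
        by_cases hz : z ∈ B <;> simp [hz]
    _ = ∫ z in B, ⟪p z, q z⟫_ℂ ∂μ := by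
        rw [integral_indicator hB]
        refine integral_congr_ae ?_
        filter_upwards [hq] with z hz
        rw [hz, RCLike.inner_apply']

theorem orthonormal_of_ae_eq_twistedTranslate (hB : MeasurableSet B)
    (hdisj : ∀ y k k', (g k)⁻¹ * y ∈ B → (g k')⁻¹ * y ∈ B → k = k')
    (hσ_unit : ∀ x y, ‖σ x y‖ = 1) {e : ι → Lp ℂ 2 (μ.restrict B)} (he : Orthonormal ℂ e)
    {u : κ × ι → Lp ℂ 2 μ}
    (hu : ∀ k i, u (k, i) =ᵐ[μ] twistedTranslate σ (g k) (B.indicator (e i))) :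
    Orthonormal ℂ u := by
  classical
  rw [orthonormal_iff_ite]
  rintro ⟨k, i⟩ ⟨k', j⟩
  have hadj := twistedTranslateAdjoint_ae_congr σ (g k) (hu k' j)
  obtain rfl | hne := eq_or_ne k k'
  · rw [inner_eq_inner_restrict_twistedTranslateAdjoint hB (hu k i) (q := e j),
      orthonormal_iff_ite.mp he]
    · simp
    rw [twistedTranslateAdjoint_twistedTranslate (hσ_unit (g k))] at hadj
    filter_upwards [ae_restrict_of_ae hadj, ae_restrict_mem hB] with z hz hzB
    rw [hz, Set.indicator_of_mem hzB]
  · rw [inner_eq_inner_restrict_twistedTranslateAdjoint hB (hu k i) (q := 0), inner_zero_right]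
    · simp [hne]
    filter_upwards [Lp.coeFn_zero ℂ 2 (μ.restrict B), ae_restrict_of_ae hadj,
      ae_restrict_mem hB] with z h0 hz hzB
    have hzB' : (g k')⁻¹ * (g k * z) ∉ B := fun h =>
      hne (hdisj (g k * z) k k' (by rwa [inv_mul_cancel_left]) h)
    rw [h0, hz, twistedTranslateAdjoint_twistedTranslate_indicator_of_notMem hzB']
    rfl

theorem dense_span_of_ae_eq_twistedTranslate [Countable κ] (hB : MeasurableSet B)
    (hcover : ∀ y, ∃ k, (g k)⁻¹ * y ∈ B) (hσ_meas : ∀ x, Measurable (σ x))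
    (hσ_unit : ∀ x y, ‖σ x y‖ = 1) (e : HilbertBasis ι ℂ (Lp ℂ 2 (μ.restrict B)))
    {u : κ × ι → Lp ℂ 2 μ}
    (hu : ∀ k i, u (k, i) =ᵐ[μ] twistedTranslate σ (g k) (B.indicator (e i))) :
    (Submodule.span ℂ (Set.range u)).topologicalClosure = ⊤ := by
  rw [Submodule.topologicalClosure_eq_top_iff, Submodule.eq_bot_iff]
  intro f hf
  have hfB (k : κ) : ∀ᵐ z ∂μ.restrict B, f (g k * z) = 0 := by
    have hq := (memLp_twistedTranslateAdjoint (hσ_meas (g k)) (hσ_unit (g k))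
      (Lp.memLp f)).restrict B
    have hq0 : hq.toLp = 0 := e.eq_zero_of_forall_inner_eq_zero fun i => by
      rw [← inner_eq_inner_restrict_twistedTranslateAdjoint hB (hu k i) hq.coeFn_toLp]
      exact Submodule.inner_right_of_mem_orthogonal
        (Submodule.subset_span (Set.mem_range_self (k, i))) hf
    filter_upwards [hq.coeFn_toLp, hq0 ▸ Lp.coeFn_zero ℂ 2 (μ.restrict B)] with z hz hz0
    simpa [twistedTranslateAdjoint, hz0, ← norm_eq_zero (a := σ _ _), hσ_unit] using hz.symm
  exact Lp.eq_zero_iff_ae_eq_zero.mpr (ae_of_forall_ae_restrict_mul_left hB hcover hfB)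

end TwistedTranslate

theorem twisted_translates_of_onb_fundamental_domain_general {G : Type*} [Group G]
    [TopologicalSpace G] [IsTopologicalGroup G]
    [SecondCountableTopology G] [MeasurableSpace G] [BorelSpace G]
    (μ : Measure G) [μ.IsHaarMeasure]
    (σ : G → G → ℂ)
    (hσ_unit : ∀ x y, ‖σ x y‖ = 1)
    (hσ_meas : Measurable fun p : G × G => σ p.1 p.2)
    -- Γ is a discrete subgroup with Borel fundamental domain B
    (Γ : Subgroup G) [DiscreteTopology Γ]
    (B : Set G) (hBmeas : MeasurableSet B)
    (hB : ∀ x : G, ∃! γ : Γ, (γ : G)⁻¹ * x ∈ B)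
    -- the σ-projective left regular representation of G on L²(G)
    (lamG : G → (Lp ℂ 2 μ →L[ℂ] Lp ℂ 2 μ))
    (hlamG : ∀ (x : G) (f : Lp ℂ 2 μ),
      (lamG x f : G → ℂ) =ᵐ[μ] fun y => σ x (x⁻¹ * y) * f (x⁻¹ * y))
    -- an orthonormal basis (e_i) of L²(B) and the extensions ẽ_i by zero
    {ι : Type*} (e : HilbertBasis ι ℂ (Lp ℂ 2 (μ.restrict B)))
    (te : ι → Lp ℂ 2 μ)
    (hte : ∀ i : ι, (te i : G → ℂ) =ᵐ[μ] B.indicator (e i : G → ℂ)) :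
    -- the family (λ_σ^G(γ) ẽ_i) is an orthonormal basis of L²(G)
    Orthonormal ℂ (fun p : Γ × ι => lamG (p.1 : G) (te p.2)) ∧
      (Submodule.span ℂ
        (Set.range fun p : Γ × ι => lamG (p.1 : G) (te p.2))).topologicalClosure = ⊤ := by
  have hu (γ : Γ) (i : ι) :
      (lamG γ (te i) : G → ℂ) =ᵐ[μ] twistedTranslate σ γ (B.indicator (e i)) :=
    (hlamG γ (te i)).trans (twistedTranslate_ae_congr σ γ (hte i))
  have : Countable Γ := TopologicalSpace.separableSpace_iff_countable.mp inferInstance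
  exact ⟨orthonormal_of_ae_eq_twistedTranslate hBmeas (fun y _ _ => (hB y).unique) hσ_unit
      e.orthonormal hu,
    dense_span_of_ae_eq_twistedTranslate hBmeas (fun y => (hB y).exists)
      (fun x => hσ_meas.comp measurable_prodMk_left) hσ_unit e hu⟩

/-- if `(e_i)` is an orthonormal basis of `L²(B)` for a Borel fundamental
domain `B` of a discrete subgroup `Γ` of `G`, and `ẽ_i` denotes the extension of `e_i`
by zero, then `(λ_σ^G(γ) ẽ_i)_{γ ∈ Γ, i ∈ I}` is an orthonormal basis of `L²(G)`. -/
theorem twisted_translates_of_onb_fundamental_domain {G : Type*} [Group G]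
    [TopologicalSpace G] [IsTopologicalGroup G] [LocallyCompactSpace G]
    [SecondCountableTopology G] [MeasurableSpace G] [BorelSpace G]
    (μ : Measure G) [μ.IsHaarMeasure] [μ.IsMulRightInvariant]
    (σ : G → G → ℂ)
    (hσ_unit : ∀ x y, ‖σ x y‖ = 1)
    (hσ_meas : Measurable fun p : G × G => σ p.1 p.2)
    (hσ_cocycle : ∀ x y z, σ x y * σ (x * y) z = σ x (y * z) * σ y z)
    (hσ_one : σ 1 1 = 1)
    -- Γ is a discrete subgroup with Borel fundamental domain B
    (Γ : Subgroup G) [DiscreteTopology Γ]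
    (B : Set G) (hBmeas : MeasurableSet B)
    (hB : ∀ x : G, ∃! γ : Γ, (γ : G)⁻¹ * x ∈ B)
    -- the σ-projective left regular representation of G on L²(G)
    (lamG : G → (Lp ℂ 2 μ →L[ℂ] Lp ℂ 2 μ))
    (hlamG : ∀ (x : G) (f : Lp ℂ 2 μ),
      (lamG x f : G → ℂ) =ᵐ[μ] fun y => σ x (x⁻¹ * y) * f (x⁻¹ * y))
    -- an orthonormal basis (e_i) of L²(B) and the extensions ẽ_i by zero
    {ι : Type*} (e : HilbertBasis ι ℂ (Lp ℂ 2 (μ.restrict B)))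
    (te : ι → Lp ℂ 2 μ)
    (hte : ∀ i : ι, (te i : G → ℂ) =ᵐ[μ] B.indicator (e i : G → ℂ)) :
    -- the family (λ_σ^G(γ) ẽ_i) is an orthonormal basis of L²(G)
    Orthonormal ℂ (fun p : Γ × ι => lamG (p.1 : G) (te p.2)) ∧
      (Submodule.span ℂ
        (Set.range fun p : Γ × ι => lamG (p.1 : G) (te p.2))).topologicalClosure = ⊤ :=
  twisted_translates_of_onb_fundamental_domain_general μ σ hσ_unit hσ_meas Γ B hBmeas hB lamG hlamG
    e te hte
end
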